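/- arXiv:1106.4633 — 3 statements merged into one kernel-verified Lean document; each statement's English description precedes it below -/
import Mathlib

section
/- For positive integers m and d ≥ 2, the quadratic polynomial g(n) = (n+d)(n+d-1) + m·n(n-1) satisfies: every complex root α of g satisfies -d < Re(α) < 1. (In particular Conjecture-type bounds hold for k = 2.) -/
theorem stmt_7 (m d : ℕ) (hm : 1 ≤ m) (hd : 2 ≤ d) :
    ∀ α : ℂ, (α + d) * (α + d - 1) + m * α * (α - 1) = 0 →
      -(d : ℝ) < α.re ∧ α.re < 1 := by
  intro α h
  have hm' : (1 : ℝ) ≤ m := by exact_mod_cast hm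
  have hd' : (2 : ℝ) ≤ d := by exact_mod_cast hd
  set x := α.re
  set y := α.im
  have hre : ((α + d) * (α + d - 1) + m * α * (α - 1)).re = 0 := by rw [h]; rfl
  have him : ((α + d) * (α + d - 1) + m * α * (α - 1)).im = 0 := by rw [h]; rfl
  simp [Complex.add_re, Complex.add_im, Complex.mul_re, Complex.mul_im, Complex.sub_re,
    Complex.sub_im, Complex.ofReal_re, Complex.natCast_re, Complex.natCast_im] at hre him
  have hre' : (x + d) * (x + d - 1) - y * y + (m * x * (x - 1) - m * y * y) = 0 := hre
  have him' : (x + d) * y + y * (x + d - 1) + (m * x * y + m * y * (x - 1)) = 0 := him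
  rcases eq_or_ne y 0 with hy | hy
  · rw [hy] at hre'
    constructor
    · nlinarith [sq_nonneg (x + d), sq_nonneg x, sq_nonneg y]
    · nlinarith [sq_nonneg (x + d), sq_nonneg (x - 1), sq_nonneg y]
  · have hx : 2 * (m + 1) * x = m + 1 - 2 * d := by
      have : y * (2 * (m + 1) * x + (2 * d - 1 - m)) = 0 := by ring_nf; ring_nf at him'; linarith
      rcases mul_eq_zero.mp this with h' | h'
      · exact absurd h' hy
      · linarith
    constructor
    · nlinarith
    · nlinarith
end

section
/- Let d ≥ 2 and 1 ≤ k ≤ d be integers and set g(n) = ∏_{j=d-k+1}^{d}(n+j) + ∏_{j=0}^{k-1}(n-j) (i.e., the case m = 1). Then every complex root α of g satisfies Re(α) = (-d+k-1)/2. -/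
/-!
Write `a = d - k + 1`. After reindexing, the root equation says
`∏_{i<k} (α + a + i) = -∏_{i<k} (α - i)`, so the two products have the same modulus.
The `i`-th factors measure the distances from `α` to the real points `-(a + i)` and `i`, whose
midpoint `-a/2` does not depend on `i`. If `Re α ≠ -a/2`, then `α` is strictly closer to one
point of every pair than to the other, and the moduli of the products differ.
-/

open Finset

lemma Finset.prod_lt_prod_of_nonempty_of_nonneg {ι R : Type*} [CommMonoidWithZero R]
    [PartialOrder R] [ZeroLEOneClass R] [PosMulStrictMono R] [Nontrivial R]
    {s : Finset ι} {f g : ι → R} (hs : s.Nonempty) (hf : ∀ i ∈ s, 0 ≤ f i)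
    (hfg : ∀ i ∈ s, f i < g i) :
    ∏ i ∈ s, f i < ∏ i ∈ s, g i := by
  by_cases hzero : ∃ i ∈ s, f i = 0
  · obtain ⟨i, hi, hfi⟩ := hzero
    rw [prod_eq_zero hi hfi]
    exact prod_pos fun j hj => (hf j hj).trans_lt (hfg j hj)
  · push Not at hzero
    exact prod_lt_prod_of_nonempty (fun i hi => (hf i hi).lt_of_ne' (hzero i hi)) hfg hs

namespace Complex

lemma norm_sub_ofReal_lt_norm_sub_ofReal_iff (z : ℂ) (s t : ℝ) :
    ‖z - t‖ < ‖z - s‖ ↔ 0 < (t - s) * (2 * z.re - s - t) := by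
  rw [← sq_lt_sq₀ (norm_nonneg _) (norm_nonneg _), Complex.sq_norm, Complex.sq_norm,
    ← sub_pos]
  simp only [normSq_apply, sub_re, sub_im, ofReal_re, ofReal_im]
  ring_nf

lemma re_eq_of_prod_norm_sub_eq {ι : Type*} {s : Finset ι} (hs : s.Nonempty) {p q : ι → ℝ}
    {c : ℝ} (hpq : ∀ i ∈ s, p i < q i) (hmid : ∀ i ∈ s, p i + q i = 2 * c) {z : ℂ}
    (h : ∏ i ∈ s, ‖z - p i‖ = ∏ i ∈ s, ‖z - q i‖) :
    z.re = c := by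
  rcases lt_trichotomy z.re c with hlt | heq | hgt
  · refine absurd h (prod_lt_prod_of_nonempty_of_nonneg hs (fun _ _ => norm_nonneg _)
      fun i hi => ?_).ne
    rw [norm_sub_ofReal_lt_norm_sub_ofReal_iff]
    nlinarith [hpq i hi, hmid i hi]
  · exact heq
  · refine absurd h (prod_lt_prod_of_nonempty_of_nonneg hs (fun _ _ => norm_nonneg _)
      fun i hi => ?_).ne'
    rw [norm_sub_ofReal_lt_norm_sub_ofReal_iff]
    nlinarith [hpq i hi, hmid i hi]

end Complex

theorem stmt_8_general (d k : ℕ) (hk1 : 1 ≤ k) (hkd : k ≤ d) :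
    ∀ α : ℂ,
      (∏ j ∈ Finset.Icc (d - k + 1) d, (α + (j : ℂ)))
          + (∏ j ∈ Finset.range k, (α - (j : ℂ))) = 0 →
        α.re = (-(d : ℝ) + k - 1) / 2 := by
  intro α hα
  set a := d - k + 1 with ha
  have hreindex : ∏ j ∈ Icc a d, (α + (j : ℂ)) = ∏ i ∈ range k, (α + ((a + i : ℕ) : ℂ)) := by
    rw [← Ico_add_one_right_eq_Icc, prod_Ico_eq_prod_range, show d + 1 - a = k by omega]
  have hneg : ∏ i ∈ range k, (α + ((a + i : ℕ) : ℂ)) = -∏ i ∈ range k, (α - (i : ℂ)) := by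
    rw [← hreindex]
    linear_combination hα
  have hnorm : ∏ i ∈ range k, ‖α - ((-(a + i) : ℝ) : ℂ)‖
      = ∏ i ∈ range k, ‖α - ((i : ℝ) : ℂ)‖ := by
    have := congrArg norm hneg
    rw [norm_neg, norm_prod, norm_prod] at this
    push_cast at this ⊢
    simpa only [sub_neg_eq_add] using this
  have hmid : (-(d : ℝ) + k - 1) / 2 = -(a : ℝ) / 2 := by
    rw [ha, Nat.cast_add, Nat.cast_sub hkd]
    ring
  rw [hmid]
  refine Complex.re_eq_of_prod_norm_sub_eq (nonempty_range_iff.mpr (by omega))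
    (fun i _ => ?_) (fun i _ => by ring) hnorm
  have : (0 : ℝ) < a := by positivity
  linarith [(Nat.cast_nonneg i : (0 : ℝ) ≤ i)]

theorem stmt_8 (d k : ℕ) (hd : 2 ≤ d) (hk1 : 1 ≤ k) (hkd : k ≤ d) :
    ∀ α : ℂ,
      (∏ j ∈ Finset.Icc (d - k + 1) d, (α + (j : ℂ)))
          + (∏ j ∈ Finset.range k, (α - (j : ℂ))) = 0 →
        α.re = (-(d : ℝ) + k - 1) / 2 :=
  stmt_8_general d k hk1 hkd
end

section
/- The polynomial g(n) = ∏_{j=8}^{15}(n+j) + 9·∏_{j=0}^{7}(n-j) (a degree-8 real polynomial) has a complex root α with Re(α) > 14, i.e., with Re(α) > d - 1 = 14 for d = 15. Consequently, the degree-15 polynomial f(n) = C(n+15,15) + 9·C(n+7,15) has a root whose real part exceeds 14. -/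
/-!
If every root `a` of `g` satisfied `Re a ≤ 14`, then `|w - a| ≤ |z - a|` for the points
`w = 13 + 25i` and `z = 15 + 25i`, mirror images across the line `Re = 14`, and factoring `g` over
its roots would give `|g(w)| ≤ |g(z)|`. Evaluating `g` at these two Gaussian integers shows the
opposite strict inequality. Since `15! · f(n) = ∏_{j=1}^{7} (n + j) · g(n)`, the root of `g` found
this way is also a root of `f`.
-/

open Finset Polynomial

namespace Complex

theorem normSq_sub_le_normSq_sub_of_two_mul_re_le {a w z : ℂ} (him : w.im = z.im)
    (hre : w.re ≤ z.re) (ha : 2 * a.re ≤ w.re + z.re) : normSq (w - a) ≤ normSq (z - a) := by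
  simp only [normSq_apply, sub_re, sub_im, him]
  nlinarith

end Complex

namespace Polynomial

theorem eval_eq_leadingCoeff_mul_prod_roots (p : ℂ[X]) (z : ℂ) :
    p.eval z = p.leadingCoeff * (p.roots.map (z - ·)).prod := by
  conv_lhs =>
    rw [← C_leadingCoeff_mul_prod_multiset_X_sub_C (IsAlgClosed.card_roots_eq_natDegree (p := p))]
  simp [eval_multiset_prod, Multiset.map_map]

theorem normSq_eval_le_normSq_eval_of_forall_roots (p : ℂ[X]) {w z : ℂ} (him : w.im = z.im)
    (hre : w.re ≤ z.re) (hroots : ∀ a ∈ p.roots, 2 * a.re ≤ w.re + z.re) :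
    Complex.normSq (p.eval w) ≤ Complex.normSq (p.eval z) := by
  simp only [eval_eq_leadingCoeff_mul_prod_roots p, map_mul, map_multiset_prod, Multiset.map_map,
    Function.comp_def]
  refine mul_le_mul_of_nonneg_left ?_ (Complex.normSq_nonneg _)
  exact Multiset.prod_map_le_prod_map₀ _ _ (fun _ _ => Complex.normSq_nonneg _)
    fun a ha => Complex.normSq_sub_le_normSq_sub_of_two_mul_re_le him hre (hroots a ha)

theorem exists_isRoot_two_mul_re_gt_of_normSq_eval_lt (p : ℂ[X]) {w z : ℂ} (him : w.im = z.im)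
    (hre : w.re ≤ z.re) (hlt : Complex.normSq (p.eval z) < Complex.normSq (p.eval w)) :
    ∃ a, p.IsRoot a ∧ w.re + z.re < 2 * a.re := by
  by_contra! h
  refine hlt.not_ge (p.normSq_eval_le_normSq_eval_of_forall_roots him hre fun a ha => ?_)
  exact h a (isRoot_of_mem_roots ha)

end Polynomial

noncomputable def gPoly : ℂ[X] :=
  (∏ j ∈ Icc (8:ℕ) 15, (X + C (j : ℂ))) + 9 * ∏ j ∈ range 8, (X - C (j : ℂ))

theorem eval_gPoly (z : ℂ) :
    gPoly.eval z = (∏ j ∈ Icc (8:ℕ) 15, (z + j)) + 9 * ∏ j ∈ range 8, (z - j) := by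
  simp [gPoly, eval_prod]

theorem eval_gPoly_eq_prod_range (z : ℂ) :
    gPoly.eval z = (∏ j ∈ range 8, (z + (8 + j : ℕ))) + 9 * ∏ j ∈ range 8, (z - j) := by
  rw [eval_gPoly, ← Ico_add_one_right_eq_Icc, prod_Ico_eq_prod_range]
  rfl

theorem eval_gPoly_13_25 : gPoly.eval ⟨13, 25⟩ = ⟨-85535504840, -388556926000⟩ := by
  rw [eval_gPoly_eq_prod_range]
  simp only [prod_range_succ, prod_range_zero]
  norm_num [Complex.ext_iff]

theorem eval_gPoly_15_25 : gPoly.eval ⟨15, 25⟩ = ⟨137312543800, 183946606000⟩ := by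
  rw [eval_gPoly_eq_prod_range]
  simp only [prod_range_succ, prod_range_zero]
  norm_num [Complex.ext_iff]

theorem exists_isRoot_gPoly_re_gt : ∃ α, gPoly.IsRoot α ∧ 14 < α.re := by
  have hlt : Complex.normSq (gPoly.eval ⟨15, 25⟩) < Complex.normSq (gPoly.eval ⟨13, 25⟩) := by
    rw [eval_gPoly_13_25, eval_gPoly_15_25, Complex.normSq_mk, Complex.normSq_mk]
    norm_num
  obtain ⟨α, hroot, hre⟩ := gPoly.exists_isRoot_two_mul_re_gt_of_normSq_eval_lt
    (w := ⟨13, 25⟩) (z := ⟨15, 25⟩) rfl (by norm_num) hlt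
  exact ⟨α, hroot, by norm_num at hre; linarith⟩

theorem stmt_10 :
    (∃ α : ℂ,
        (∏ j ∈ Finset.Icc (8:ℕ) 15, (α + (j : ℂ))) + 9 * ∏ j ∈ Finset.range 8, (α - (j : ℂ)) = 0
          ∧ 14 < α.re)
      ∧ ∃ α : ℂ,
          (∏ j ∈ Finset.Icc (1:ℕ) 15, (α + (j : ℂ))) / (Nat.factorial 15 : ℂ)
              + 9 * ((∏ j ∈ Finset.range 8, (α - (j : ℂ)))
                  * ∏ j ∈ Finset.Icc (1:ℕ) 7, (α + (j : ℂ))) / (Nat.factorial 15 : ℂ) = 0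
            ∧ 14 < α.re := by
  obtain ⟨α, hroot, hre⟩ := exists_isRoot_gPoly_re_gt
  rw [IsRoot, eval_gPoly] at hroot
  refine ⟨⟨α, hroot, hre⟩, α, ?_, hre⟩
  have hsplit : ∏ j ∈ Icc (1:ℕ) 15, (α + j) =
      (∏ j ∈ Icc (1:ℕ) 7, (α + j)) * ∏ j ∈ Icc (8:ℕ) 15, (α + j) := by
    rw [← prod_union (by decide), show Icc (1:ℕ) 7 ∪ Icc 8 15 = Icc 1 15 by decide]
  rw [hsplit, ← add_div, div_eq_zero_iff]
  left
  linear_combination (∏ j ∈ Icc (1:ℕ) 7, (α + j)) * hroot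
end
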